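/- Let N > 0 be a real number and define the ergodic sum-rate R_E(ρ) = N · e^(N·10^(−ρ/10)) · E₁(N·10^(−ρ/10)) for ρ ∈ ℝ, where E₁(x) = ∫ₓ^∞ e^(−t)/t dt. Then R_E(ρ) − N·((ρ/10)·log(10) − γ − log(N)) tends to 0 as ρ → ∞, where γ is the Euler–Mascheroni constant; i.e., the high-SNR asymptote of R_E is R_E^∞(ρ) = N·((ρ/10)·log(10) − γ − log(N)). -/

import Mathlib

/-!
With `x = N·10^(-ρ/10) → 0⁺` we have `log x = log N - (ρ/10)·log 10`, so the claim is
`e^x E₁(x) = -γ - log x + o(1)` as `x → 0⁺`. Integrating by parts,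
`E₁(x) = ∫ₓ^∞ e^(-t) log t dt - e^(-x) log x`, and the integral tends to
`∫₀^∞ e^(-t) log t dt = Γ'(1) = -γ`.
-/

open Real Filter

/-- The exponential integral `E₁(x) = ∫ₓ^∞ e^(−t)/t dt`. -/
noncomputable def expIntegralE1 (x : ℝ) : ℝ := ∫ t in Set.Ioi x, Real.exp (-t) / t

open MeasureTheory Set Topology

local notation "γ" => Real.eulerMascheroniConstant

lemma abs_log_le_rpow_add_rpow_neg_div {t ε : ℝ} (ht : 0 < t) (hε : 0 < ε) :
    |log t| ≤ (t ^ ε + t ^ (-ε)) / ε := by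
  rcases le_or_gt 0 (log t) with hlog | hlog
  · rw [abs_of_nonneg hlog]
    exact (log_le_rpow_div ht.le hε).trans (by gcongr; linarith [rpow_pos_of_pos ht (-ε)])
  · rw [abs_of_neg hlog, ← log_inv]
    refine (log_le_rpow_div (inv_nonneg.2 ht.le) hε).trans ?_
    rw [inv_rpow ht.le, ← rpow_neg ht.le]
    gcongr
    linarith [rpow_pos_of_pos ht ε]

lemma integrableOn_exp_neg_mul_log : IntegrableOn (fun t => exp (-t) * log t) (Ioi 0) := by
  -- `|log t| ≤ 2 (t^{1/2} + t^{-1/2})`, and `e^{-t} t^{±1/2}` are Gamma integrands.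
  have hdom : IntegrableOn
      (fun t => 2 * (exp (-t) * t ^ ((3 / 2 : ℝ) - 1) + exp (-t) * t ^ ((1 / 2 : ℝ) - 1)))
      (Ioi 0) :=
    ((GammaIntegral_convergent (by norm_num)).add
      (GammaIntegral_convergent (by norm_num))).const_mul 2
  refine hdom.mono' ?_ ?_
  · exact (continuousOn_id.neg.rexp.mul (continuousOn_log.mono fun t ht => ht.ne'))
      |>.aestronglyMeasurable measurableSet_Ioi
  · filter_upwards [ae_restrict_mem measurableSet_Ioi] with t (ht : 0 < t)
    have hlog := abs_log_le_rpow_add_rpow_neg_div ht (by norm_num : (0 : ℝ) < 1 / 2)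
    norm_num at hlog ⊢
    nlinarith [exp_pos (-t)]

lemma integral_exp_neg_mul_log : ∫ t in Ioi 0, exp (-t) * log t = -γ := by
  have hGammaIntegral := Complex.hasDerivAt_GammaIntegral (s := 1) (by simp)
  have hGamma : HasDerivAt Complex.Gamma (-(γ : ℂ)) 1 := by
    simpa using Complex.hasDerivAt_Gamma_one
  have hEq : Complex.Gamma =ᶠ[𝓝 1] Complex.GammaIntegral := by
    filter_upwards [(isOpen_lt continuous_const Complex.continuous_re).mem_nhds
      (by simp : (0 : ℝ) < (1 : ℂ).re)] with s hs using Complex.Gamma_eq_integral hs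
  have hcomplex := (hGamma.congr_of_eventuallyEq hEq.symm).unique hGammaIntegral
  have hreal : ∫ t in Ioi (0 : ℝ), (t : ℂ) ^ ((1 : ℂ) - 1) * (log t * exp (-t))
      = ((∫ t in Ioi 0, exp (-t) * log t : ℝ) : ℂ) := by
    rw [← integral_complex_ofReal]
    refine setIntegral_congr_fun measurableSet_Ioi fun t _ => ?_
    rw [sub_self, Complex.cpow_zero, one_mul]
    push_cast
    ring
  exact_mod_cast hreal ▸ hcomplex.symm

lemma integrableOn_exp_neg_div_self {x : ℝ} (hx : 0 < x) :
    IntegrableOn (fun t => exp (-t) / t) (Ioi x) := by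
  refine ((integrableOn_exp_neg_Ioi x).const_mul x⁻¹).mono' ?_ ?_
  · exact (continuousOn_id.neg.rexp.div continuousOn_id fun t (ht : x < t) => (hx.trans ht).ne')
      |>.aestronglyMeasurable measurableSet_Ioi
  · filter_upwards [ae_restrict_mem measurableSet_Ioi] with t (ht : x < t)
    rw [norm_of_nonneg (div_pos (exp_pos _) (hx.trans ht)).le, div_eq_inv_mul]
    gcongr

lemma tendsto_exp_neg_mul_log_atTop : Tendsto (fun t => exp (-t) * log t) atTop (𝓝 0) := by
  refine squeeze_zero' ?_ ?_ (tendsto_pow_mul_exp_neg_atTop_nhds_zero 1)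
  · filter_upwards [eventually_ge_atTop 1] with t ht
    exact mul_nonneg (exp_pos _).le (log_nonneg ht)
  · filter_upwards [eventually_gt_atTop 0] with t ht
    rw [pow_one, mul_comm]
    exact mul_le_mul_of_nonneg_right ((log_le_sub_one_of_pos ht).trans (by linarith))
      (exp_pos _).le

lemma expIntegralE1_eq_integral_exp_neg_mul_log_sub {x : ℝ} (hx : 0 < x) :
    expIntegralE1 x = (∫ t in Ioi x, exp (-t) * log t) - exp (-x) * log x := by
  have hlog : IntegrableOn (fun t => exp (-t) * log t) (Ioi x) :=
    integrableOn_exp_neg_mul_log.mono_set (Ioi_subset_Ioi hx.le)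
  have hparts := integral_Ioi_of_hasDerivAt_of_tendsto
    (f := fun t => -(exp (-t) * log t)) (f' := fun t => exp (-t) * log t - exp (-t) / t)
    (continuousAt_id.neg.rexp.mul (continuousAt_log hx.ne')).neg.continuousWithinAt
    (fun t (ht : x < t) => by
      convert ((hasDerivAt_neg t).exp.fun_mul (hasDerivAt_log (hx.trans ht).ne')).fun_neg using 1
      rw [div_eq_mul_inv]
      ring)
    (hlog.sub (integrableOn_exp_neg_div_self hx))
    (by simpa using tendsto_exp_neg_mul_log_atTop.neg)
  rw [integral_sub hlog (integrableOn_exp_neg_div_self hx)] at hparts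
  unfold expIntegralE1
  linarith

lemma tendsto_exp_mul_expIntegralE1_add_log :
    Tendsto (fun x => exp x * expIntegralE1 x + γ + log x) (𝓝[>] 0) (𝓝 0) := by
  have htail : Tendsto (fun x => ∫ t in Ioi x, exp (-t) * log t) (𝓝[>] 0) (𝓝 (-γ)) :=
    integral_exp_neg_mul_log ▸
      (integrableOn_exp_neg_mul_log.continuousWithinAt_Ici_primitive_Ioi.mono Ioi_subset_Ici_self)
  have hexp : Tendsto exp (𝓝[>] 0) (𝓝 1) :=
    (continuous_exp.tendsto' 0 1 exp_zero).mono_left nhdsWithin_le_nhds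
  have hsum : Tendsto (fun x => exp x * (∫ t in Ioi x, exp (-t) * log t) + γ)
      (𝓝[>] 0) (𝓝 0) := by
    simpa using (hexp.mul htail).add_const γ
  refine hsum.congr' ?_
  filter_upwards [self_mem_nhdsWithin] with x (hx : 0 < x)
  rw [expIntegralE1_eq_integral_exp_neg_mul_log_sub hx, mul_sub, ← mul_assoc, ← exp_add,
    add_neg_cancel, exp_zero, one_mul]
  ring

lemma tendsto_mul_rpow_neg_div_atTop {c b d : ℝ} (hc : 0 < c) (hb : 1 < b) (hd : 0 < d) :
    Tendsto (fun ρ => c * b ^ (-ρ / d)) atTop (𝓝[>] 0) := by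
  refine tendsto_nhdsWithin_iff.2 ⟨?_, .of_forall fun ρ => mem_Ioi.2 (by positivity)⟩
  have hexponent : Tendsto (fun ρ : ℝ => -ρ / d) atTop atBot :=
    tendsto_neg_atTop_atBot.atBot_div_const hd
  simpa using ((tendsto_rpow_atBot_of_base_gt_one b hb).comp hexponent).const_mul c

/-- The high-SNR asymptote of the ergodic sum-rate
`R_E(ρ) = N·e^(N·10^(−ρ/10))·E₁(N·10^(−ρ/10))` is `N·((ρ/10)·log 10 − γ − log N)`:
their difference tends to `0` as `ρ → ∞`. -/
theorem ergodic_high_snr_asymptote (N : ℝ) (hN : 0 < N) :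
    Tendsto (fun ρ : ℝ =>
        N * Real.exp (N * (10 : ℝ) ^ (-ρ / 10)) * expIntegralE1 (N * (10 : ℝ) ^ (-ρ / 10))
          - N * ((ρ / 10) * Real.log 10 - Real.eulerMascheroniConstant - Real.log N))
      atTop (nhds 0) := by
  have hx : Tendsto (fun ρ : ℝ => N * (10 : ℝ) ^ (-ρ / 10)) atTop (𝓝[>] 0) :=
    tendsto_mul_rpow_neg_div_atTop hN (by norm_num) (by norm_num)
  have hlimit := (tendsto_exp_mul_expIntegralE1_add_log.comp hx).const_mul N
  rw [mul_zero] at hlimit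
  refine hlimit.congr fun ρ => ?_
  simp only [Function.comp_apply]
  rw [log_mul hN.ne' (by positivity), log_rpow (by norm_num)]
  ring
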